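/- Let X_1,...,X_n be 1-dependent complex/real random variables with finite exponential moments at u, let φ_1(u) = E e^{uX_1}, Y_k = e^{uX_k} − 1, and suppose φ_j(u) ≠ 0 for all j < k. Then the moment generating function factorizes as E e^{u(X_1+⋯+X_n)} = φ_1(u)⋯φ_n(u), where for k ≥ 2, φ_k(u) = 1 + E Y_k + Σ_{j=1}^{k-1} Ê(Y_j, Y_{j+1},...,Y_k)/(φ_j(u) φ_{j+1}(u) ⋯ φ_{k-1}(u)). -/

import Mathlib

open MeasureTheory Finset

/-- Heinrich's mixed cumulant functional Ê: `heinrichE μ Y k` corresponds to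
`Ê(Y 0, Y 1, ..., Y k)` (so `k+1` variables). -/
noncomputable def heinrichE {Ω : Type*} [MeasurableSpace Ω] (μ : Measure Ω)
    (Y : ℕ → Ω → ℂ) : ℕ → ℂ
  | k =>
    (∫ ω, ∏ m ∈ Finset.range (k + 1), Y m ω ∂μ) -
      ∑ j ∈ (Finset.range k).attach,
        heinrichE μ Y j.1 * ∫ ω, ∏ m ∈ Finset.Icc (j.1 + 1) k, Y m ω ∂μ
  termination_by k => k
  decreasing_by exact Finset.mem_range.mp j.2

/-- The sequence `X` is 1-dependent. -/
def OneDependent {Ω : Type*} [MeasurableSpace Ω] (μ : Measure Ω) (X : ℕ → Ω → ℝ) : Prop :=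
  ∀ s t : ℕ, s + 1 < t →
    ProbabilityTheory.Indep
      (⨆ i ∈ Finset.range (s + 1), MeasurableSpace.comap (X i) inferInstance)
      (⨆ i : ℕ, MeasurableSpace.comap (X (t + i)) inferInstance) μ

/-- Heinrich's recursively defined factors `φ_k(u)` (0-indexed): `heinrichPhi μ X u 0 = E e^{u X 0}`
and for `k ≥ 1`,
`φ_k = 1 + E Y_k + ∑_{j=0}^{k-1} Ê(Y_j, ..., Y_k) / (φ_j ⋯ φ_{k-1})` where `Y_i = e^{u X_i} - 1`. -/
noncomputable def heinrichPhi {Ω : Type*} [MeasurableSpace Ω] (μ : Measure Ω)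
    (X : ℕ → Ω → ℝ) (u : ℂ) : ℕ → ℂ
  | 0 => ∫ ω, Complex.exp (u * X 0 ω) ∂μ
  | (k + 1) =>
    1 + (∫ ω, (Complex.exp (u * X (k + 1) ω) - 1) ∂μ) +
      ∑ j ∈ (Finset.range (k + 1)).attach,
        heinrichE μ (fun i ω => Complex.exp (u * X (j.1 + i) ω) - 1) (k + 1 - j.1) /
          ∏ l ∈ (Finset.Icc j.1 k).attach, heinrichPhi μ X u l.1
  termination_by k => k
  decreasing_by exact Nat.lt_succ_of_le (Finset.mem_Icc.mp l.2).2

/-!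
Write `S m = E[Z_0 ⋯ Z_{m-1}]` with `Z_i = e^{u X_i}` and `Y_i = Z_i - 1`. Peeling off the
factors `Z_m = 1 + Y_m` one at a time and using 1-dependence to split `Z_0 ⋯ Z_{m-1}` from the
block `Y_{m+1} ⋯ Y_k` gives
`S (k+1) - S k = E[Y_0 ⋯ Y_k] + ∑_{m<k} S m · E[Y_{m+1} ⋯ Y_k]`.
Inverting this against the recursion defining `Ê` turns it into
`S (k+1) - S k = ∑_{j≤k} S j · Ê(Y_j, …, Y_k)`, and dividing by `S k = φ_0 ⋯ φ_{k-1}` is exactly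
the recursion defining `φ_k`.
-/

open ProbabilityTheory

section Algebra

variable {R : Type*} [CommRing R]

theorem sum_mul_eq_sub_of_cumulant_recursion (S : ℕ → R) (e C : ℕ → ℕ → R)
    (hC : ∀ j k, j ≤ k → C j k = e j k - ∑ m ∈ Ico j k, C j m * e (m + 1) k)
    (hS : ∀ k, S (k + 1) - S k = S 0 * e 0 k + ∑ m ∈ range k, S m * e (m + 1) k) (k : ℕ) :
    ∑ j ∈ range (k + 1), S j * C j k = S (k + 1) - S k := by
  induction k using Nat.strong_induction_on with
  | _ k ih =>
  have hswap : ∑ j ∈ range (k + 1), ∑ m ∈ Ico j k, S j * (C j m * e (m + 1) k) =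
      ∑ m ∈ range k, (S (m + 1) - S m) * e (m + 1) k := by
    rw [sum_comm' (t' := range k) (s' := fun m => range (m + 1)) fun j m => by
      simp only [mem_range, mem_Ico]; omega]
    refine sum_congr rfl fun m hm => ?_
    rw [← ih m (mem_range.mp hm), sum_mul]
    simp only [mul_assoc]
  have hexpand : ∑ j ∈ range (k + 1), S j * C j k = ∑ j ∈ range (k + 1), S j * e j k -
      ∑ j ∈ range (k + 1), ∑ m ∈ Ico j k, S j * (C j m * e (m + 1) k) := by
    rw [← sum_sub_distrib]
    refine sum_congr rfl fun j hj => ?_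
    rw [hC j k (Nat.lt_succ_iff.mp (mem_range.mp hj)), mul_sub, mul_sum]
  rw [hexpand, hswap, hS, sum_range_succ']
  simp only [sub_mul, sum_sub_distrib]
  ring

end Algebra

theorem integrable_prod_mul_prod_sub_one {ι Ω R : Type*} [DecidableEq ι] [MeasurableSpace Ω]
    [NormedCommRing R] {μ : Measure Ω} {f : ι → Ω → R}
    (hint : ∀ s : Finset ι, Integrable (fun ω => ∏ i ∈ s, f i ω) μ) {s t : Finset ι}
    (hst : Disjoint s t) :
    Integrable (fun ω => (∏ i ∈ s, f i ω) * ∏ i ∈ t, (f i ω - 1)) μ := by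
  induction t using Finset.induction_on generalizing s with
  | empty => simpa using hint s
  | insert a t hat ih =>
    rw [disjoint_insert_right] at hst
    have hsplit : (fun ω => (∏ i ∈ s, f i ω) * ∏ i ∈ insert a t, (f i ω - 1)) =
        fun ω => (∏ i ∈ insert a s, f i ω) * (∏ i ∈ t, (f i ω - 1)) -
          (∏ i ∈ s, f i ω) * ∏ i ∈ t, (f i ω - 1) := by
      ext ω
      rw [prod_insert hat, prod_insert hst.1]
      ring
    rw [hsplit]
    exact (ih (disjoint_insert_left.mpr ⟨hat, hst.2⟩)).sub (ih hst.2)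

section Moments

variable {Ω : Type*} [MeasurableSpace Ω] (μ : Measure Ω) (Y : ℕ → Ω → ℂ)

noncomputable def prefixMoment (Z : ℕ → Ω → ℂ) (m : ℕ) : ℂ := ∫ ω, ∏ i ∈ range m, Z i ω ∂μ

noncomputable def blockMoment (j k : ℕ) : ℂ := ∫ ω, ∏ i ∈ Icc j k, Y i ω ∂μ

/-- `Ê(Y_j, …, Y_k)`. -/
noncomputable def blockCumulant (j k : ℕ) : ℂ := heinrichE μ (fun i => Y (j + i)) (k - j)

theorem heinrichE_eq (k : ℕ) :
    heinrichE μ Y k = blockMoment μ Y 0 k -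
      ∑ j ∈ range k, heinrichE μ Y j * blockMoment μ Y (j + 1) k := by
  rw [heinrichE, ← sum_attach (range k) fun j => heinrichE μ Y j * blockMoment μ Y (j + 1) k,
    blockMoment, Nat.range_succ_eq_Icc_zero]
  rfl

theorem blockMoment_shift (a b c : ℕ) :
    blockMoment μ (fun i => Y (c + i)) a b = blockMoment μ Y (c + a) (c + b) := by
  simp only [blockMoment, ← map_add_left_Icc, prod_map]
  rfl

theorem blockCumulant_eq {j k : ℕ} (hjk : j ≤ k) :
    blockCumulant μ Y j k = blockMoment μ Y j k -
      ∑ m ∈ Ico j k, blockCumulant μ Y j m * blockMoment μ Y (m + 1) k := by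
  have hk : j + (k - j) = k := Nat.add_sub_cancel' hjk
  rw [blockCumulant, heinrichE_eq, blockMoment_shift, add_zero, hk, sum_Ico_eq_sum_range]
  refine congrArg _ (sum_congr rfl fun i _ => ?_)
  rw [blockMoment_shift, hk, blockCumulant, Nat.add_sub_cancel_left, add_assoc]

end Moments

section OneDependent

variable {Ω : Type*} [MeasurableSpace Ω] {μ : Measure Ω} {X : ℕ → Ω → ℝ}

theorem OneDependent.integral_mul_eq_mul_integral (hdep : OneDependent μ X) {s t : ℕ}
    (hst : s + 1 < t) {F G : Ω → ℂ}
    (hF : Measurable[⨆ i ∈ range (s + 1), MeasurableSpace.comap (X i) inferInstance] F)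
    (hG : Measurable[⨆ i : ℕ, MeasurableSpace.comap (X (t + i)) inferInstance] G)
    (hF' : AEStronglyMeasurable F μ) (hG' : AEStronglyMeasurable G μ) :
    ∫ ω, F ω * G ω ∂μ = (∫ ω, F ω ∂μ) * ∫ ω, G ω ∂μ :=
  IndepFun.integral_fun_mul_eq_mul_integral
    (indep_of_indep_of_le_right (indep_of_indep_of_le_left (hdep s t hst) hF.comap_le)
      hG.comap_le) hF' hG'

variable [IsProbabilityMeasure μ] {g : ℝ → ℂ}

theorem OneDependent.integral_prod_range_mul_prod_Icc (hdep : OneDependent μ X) (hg : Measurable g)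
    (hint : ∀ s : Finset ℕ, Integrable (fun ω => ∏ i ∈ s, g (X i ω)) μ) {m a : ℕ} (hma : m < a)
    (b : ℕ) :
    ∫ ω, (∏ i ∈ range m, g (X i ω)) * ∏ i ∈ Icc a b, (g (X i ω) - 1) ∂μ =
      prefixMoment μ (fun i ω => g (X i ω)) m * blockMoment μ (fun i ω => g (X i ω) - 1) a b := by
  cases m with
  | zero => simp [prefixMoment, blockMoment]
  | succ s =>
    have hblock := integrable_prod_mul_prod_sub_one hint (disjoint_empty_left (Icc a b))
    simp only [prod_empty, one_mul] at hblock
    refine hdep.integral_mul_eq_mul_integral hma ?_ ?_ (hint _).aestronglyMeasurable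
      hblock.aestronglyMeasurable
    · refine Finset.measurable_prod _ fun i hi => hg.comp ?_
      exact measurable_iff_comap_le.mpr
        (le_iSup₂ (f := fun i (_ : i ∈ range (s + 1)) => MeasurableSpace.comap (X i) _) i hi)
    · refine Finset.measurable_prod _ fun i hi => (hg.comp ?_).sub_const 1
      obtain ⟨j, rfl⟩ := Nat.exists_eq_add_of_le (mem_Icc.mp hi).1
      exact measurable_iff_comap_le.mpr
        (le_iSup (fun j => MeasurableSpace.comap (X (a + j)) inferInstance) j)

theorem OneDependent.prefixMoment_succ_sub (hdep : OneDependent μ X) (hg : Measurable g)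
    (hint : ∀ s : Finset ℕ, Integrable (fun ω => ∏ i ∈ s, g (X i ω)) μ) (k : ℕ) :
    prefixMoment μ (fun i ω => g (X i ω)) (k + 1) - prefixMoment μ (fun i ω => g (X i ω)) k =
      prefixMoment μ (fun i ω => g (X i ω)) 0 * blockMoment μ (fun i ω => g (X i ω) - 1) 0 k +
        ∑ m ∈ range k, prefixMoment μ (fun i ω => g (X i ω)) m *
          blockMoment μ (fun i ω => g (X i ω) - 1) (m + 1) k := by
  set S := prefixMoment μ (fun i ω => g (X i ω))
  set e := blockMoment μ (fun i ω => g (X i ω) - 1)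
  have hpeel : ∀ m ≤ k, ∫ ω, (∏ i ∈ range m, g (X i ω)) * ∏ i ∈ Icc m k, (g (X i ω) - 1) ∂μ =
      S 0 * e 0 k + ∑ i ∈ range m, S i * e (i + 1) k := by
    intro m hmk
    induction m with
    | zero => simp [S, e, prefixMoment, blockMoment]
    | succ m ih =>
      have hsplit : (fun ω => (∏ i ∈ range (m + 1), g (X i ω)) *
            ∏ i ∈ Icc (m + 1) k, (g (X i ω) - 1)) =
          fun ω => (∏ i ∈ range m, g (X i ω)) * ∏ i ∈ Icc (m + 1) k, (g (X i ω) - 1) +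
            (∏ i ∈ range m, g (X i ω)) * ∏ i ∈ Icc m k, (g (X i ω) - 1) := by
        ext ω
        rw [prod_range_succ, ← insert_Icc_add_one_left_eq_Icc (by omega : m ≤ k),
          prod_insert (by simp)]
        ring
      have hdisj : ∀ a, m ≤ a → Disjoint (range m) (Icc a k) := fun a ha => by
        simp only [disjoint_left, mem_range, mem_Icc]
        omega
      rw [hsplit, integral_add (integrable_prod_mul_prod_sub_one hint (hdisj (m + 1) (by omega)))
          (integrable_prod_mul_prod_sub_one hint (hdisj m le_rfl)),
        hdep.integral_prod_range_mul_prod_Icc hg hint m.lt_succ_self, ih (by omega),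
        sum_range_succ]
      ring
  have hlast : ∫ ω, (∏ i ∈ range k, g (X i ω)) * ∏ i ∈ Icc k k, (g (X i ω) - 1) ∂μ =
      S (k + 1) - S k := by
    simp only [Icc_self, prod_singleton, mul_sub, mul_one, ← prod_range_succ]
    exact integral_sub (hint _) (hint _)
  rw [← hlast, hpeel k le_rfl]

end OneDependent

section HeinrichPhi

variable {Ω : Type*} [MeasurableSpace Ω] (μ : Measure Ω) (X : ℕ → Ω → ℝ) (u : ℂ)

theorem heinrichPhi_zero :
    heinrichPhi μ X u 0 = prefixMoment μ (fun i ω => Complex.exp (u * X i ω)) 1 := by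
  rw [heinrichPhi, prefixMoment, range_one]
  simp only [prod_singleton]

theorem heinrichPhi_succ (k : ℕ) :
    heinrichPhi μ X u (k + 1) =
      1 + blockCumulant μ (fun i ω => Complex.exp (u * X i ω) - 1) (k + 1) (k + 1) +
        ∑ j ∈ range (k + 1), blockCumulant μ (fun i ω => Complex.exp (u * X i ω) - 1) j (k + 1) /
          ∏ l ∈ Icc j k, heinrichPhi μ X u l := by
  rw [heinrichPhi, blockCumulant_eq _ _ le_rfl, Ico_self, sum_empty, sub_zero, blockMoment,
    Icc_self]
  simp only [prod_singleton, prod_attach]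
  rw [← sum_attach (range (k + 1))]
  rfl

theorem prod_range_mul_heinrichPhi_succ {k : ℕ} (hphi : ∀ j ≤ k, heinrichPhi μ X u j ≠ 0) :
    (∏ i ∈ range (k + 1), heinrichPhi μ X u i) * heinrichPhi μ X u (k + 1) =
      ∏ i ∈ range (k + 1), heinrichPhi μ X u i +
        ∑ j ∈ range (k + 2), (∏ i ∈ range j, heinrichPhi μ X u i) *
          blockCumulant μ (fun i ω => Complex.exp (u * X i ω) - 1) j (k + 1) := by
  have hsplit : ∀ j ∈ range (k + 1), ∏ i ∈ range (k + 1), heinrichPhi μ X u i =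
      (∏ i ∈ range j, heinrichPhi μ X u i) * ∏ l ∈ Icc j k, heinrichPhi μ X u l := by
    intro j hj
    rw [← Ico_add_one_right_eq_Icc, prod_range_mul_prod_Ico _ (mem_range.mp hj).le]
  have hne : ∀ j ∈ range (k + 1), ∏ l ∈ Icc j k, heinrichPhi μ X u l ≠ 0 :=
    fun j _ => prod_ne_zero_iff.mpr fun l hl => hphi l (mem_Icc.mp hl).2
  rw [heinrichPhi_succ, sum_range_succ _ (k + 1), mul_add, mul_add, mul_one, mul_sum, add_assoc,
    add_comm (∑ j ∈ range (k + 1), _)]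
  congr 2
  refine sum_congr rfl fun j hj => ?_
  rw [hsplit j hj]
  field_simp [hne j hj]

end HeinrichPhi

theorem OneDependent.prefixMoment_eq_prod_heinrichPhi {Ω : Type*} [MeasurableSpace Ω]
    {μ : Measure Ω} [IsProbabilityMeasure μ] {X : ℕ → Ω → ℝ} {u : ℂ} (hdep : OneDependent μ X)
    (hint : ∀ s : Finset ℕ, Integrable (fun ω => ∏ k ∈ s, Complex.exp (u * X k ω)) μ) {n : ℕ}
    (hphi : ∀ j < n, heinrichPhi μ X u j ≠ 0) :
    prefixMoment μ (fun i ω => Complex.exp (u * X i ω)) n = ∏ k ∈ range n, heinrichPhi μ X u k := by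
  set S := prefixMoment μ (fun i ω => Complex.exp (u * X i ω))
  set Y : ℕ → Ω → ℂ := fun i ω => Complex.exp (u * X i ω) - 1
  have hrec : ∀ k, S (k + 1) = S k + ∑ j ∈ range (k + 1), S j * blockCumulant μ Y j k := by
    intro k
    rw [sum_mul_eq_sub_of_cumulant_recursion S (blockMoment μ Y) (blockCumulant μ Y)
      (fun _ _ => blockCumulant_eq μ Y)
      (hdep.prefixMoment_succ_sub (g := fun x => Complex.exp (u * x)) (by fun_prop) hint)]
    ring
  induction n using Nat.strong_induction_on with
  | _ n ih =>
  match n with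
  | 0 => simp [S, prefixMoment]
  | 1 => rw [prod_range_one, heinrichPhi_zero]
  | k + 2 =>
    have hS : ∀ j < k + 2, S j = ∏ i ∈ range j, heinrichPhi μ X u i :=
      fun j hj => ih j hj fun i hi => hphi i (by omega)
    rw [hrec, hS (k + 1) (by omega), sum_congr rfl fun j hj => by rw [hS j (mem_range.mp hj)],
      prod_range_succ _ (k + 1),
      prod_range_mul_heinrichPhi_succ μ X u fun j hj => hphi j (by omega)]

theorem heinrich_factorization_general {Ω : Type*} [MeasurableSpace Ω] (μ : Measure Ω)
    [IsProbabilityMeasure μ] (X : ℕ → Ω → ℝ) (u : ℂ) (n : ℕ)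
    (hint : ∀ s : Finset ℕ, Integrable (fun ω => ∏ k ∈ s, Complex.exp (u * X k ω)) μ)
    (hdep : OneDependent μ X)
    (hphi : ∀ j < n, heinrichPhi μ X u j ≠ 0) :
    (∫ ω, Complex.exp (u * ∑ k ∈ Finset.range n, (X k ω : ℂ)) ∂μ) =
      ∏ k ∈ Finset.range n, heinrichPhi μ X u k := by
  simp only [mul_sum, Complex.exp_sum]
  exact hdep.prefixMoment_eq_prod_heinrichPhi hint hphi

theorem heinrich_factorization {Ω : Type*} [MeasurableSpace Ω] (μ : Measure Ω)
    [IsProbabilityMeasure μ] (X : ℕ → Ω → ℝ) (u : ℂ) (n : ℕ) (hn : 1 ≤ n)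
    (hmeas : ∀ k, Measurable (X k))
    (hint : ∀ s : Finset ℕ, Integrable (fun ω => ∏ k ∈ s, Complex.exp (u * X k ω)) μ)
    (hdep : OneDependent μ X)
    (hphi : ∀ j < n, heinrichPhi μ X u j ≠ 0) :
    (∫ ω, Complex.exp (u * ∑ k ∈ Finset.range n, (X k ω : ℂ)) ∂μ) =
      ∏ k ∈ Finset.range n, heinrichPhi μ X u k :=
  heinrich_factorization_general μ X u n hint hdep hphi
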